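/- In the setting of the alternating-minimization descent lemma with u₁ defined as the projection of u₀ - (1/γ)∇_u ℓ(u₀, v₀) onto Ω_u: ℓ(u₁, v₀) ≤ ℓ(u₀, v₀) - (γ/2)‖u₁ - u₀‖². -/
import Mathlib

open InnerProductSpace

/-- Descent step: if u₁ is the projection of u₀ - (1/γ)∇_u ℓ(u₀,v₀) onto Ω_u and
ℓ(·,v₀) is γ-smooth, then ℓ(u₁,v₀) ≤ ℓ(u₀,v₀) - (γ/2)‖u₁-u₀‖². -/
theorem projection_descent_step
    {d₁ d₂ : ℕ}
    (ℓ : EuclideanSpace ℝ (Fin d₁) → EuclideanSpace ℝ (Fin d₂) → ℝ)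
    (gu : EuclideanSpace ℝ (Fin d₁))  -- gu = ∇_u ℓ(u₀, v₀)
    (γ : ℝ) (hγ : 0 < γ)
    (Ωu : Set (EuclideanSpace ℝ (Fin d₁))) (hΩu : Convex ℝ Ωu)
    (u₀ : EuclideanSpace ℝ (Fin d₁)) (hu₀ : u₀ ∈ Ωu)
    (v₀ : EuclideanSpace ℝ (Fin d₂))
    -- γ-smoothness of ℓ(·, v₀) around u₀
    (hsmooth : ∀ u, ℓ u v₀ - ℓ u₀ v₀ ≤ ⟪gu, u - u₀⟫_ℝ + γ / 2 * ‖u - u₀‖ ^ 2)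
    -- u₁ = argmin_{u∈Ωu} ‖u - u₀ + (1/γ)gu‖² : first-order optimality
    (u₁ : EuclideanSpace ℝ (Fin d₁)) (hu₁ : u₁ ∈ Ωu)
    (hu₁opt : ∀ u' ∈ Ωu, 0 ≤ ⟪u₁ - u₀ + (1 / γ) • gu, u' - u₁⟫_ℝ) :
    ℓ u₁ v₀ ≤ ℓ u₀ v₀ - γ / 2 * ‖u₁ - u₀‖ ^ 2 := by
  have hopt := hu₁opt u₀ hu₀
  have h0 : u₀ - u₁ = -(u₁ - u₀) := by abel
  rw [h0, inner_add_left, real_inner_smul_left, inner_neg_right, inner_neg_right,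
    real_inner_self_eq_norm_sq] at hopt
  have hg : ⟪gu, u₁ - u₀⟫_ℝ ≤ -(γ * ‖u₁ - u₀‖ ^ 2) := by
    have h1 : (1 / γ) * ⟪gu, u₁ - u₀⟫_ℝ ≤ -(‖u₁ - u₀‖ ^ 2) := by linarith
    have h2 := mul_le_mul_of_nonneg_left h1 hγ.le
    rw [← mul_assoc, mul_one_div_cancel hγ.ne', one_mul] at h2
    linarith
  have := hsmooth u₁
  nlinarith
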